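/- arXiv:2411.15568 — 2 statements merged into one kernel-verified Lean document; each statement's English description precedes it below -/
import Mathlib

section
/- Let q be a power of a prime p, m a positive integer, f, g ∈ ℛ, and a, b ∈ 𝔽_q. Let d be a divisor of q^m − 1 and let {p₁, p₂, ..., p_r} be the collection of all primes dividing q^m − 1 but not d. Then N_{f,g,a,b}(q^m−1, q^m−1) ≥ Σ_{i=1}^{r} N_{f,g,a,b}(d, p_i d) + Σ_{i=1}^{r} N_{f,g,a,b}(p_i d, d) − (2r − 1)·N_{f,g,a,b}(d, d). -/
open scoped Classical

noncomputable section

/-- `W n = 2^{w(n)}` is the number of squarefree divisors of `n`,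
where `w(n)` is the number of distinct prime divisors of `n`. -/
def W (n : ℕ) : ℕ := 2 ^ n.primeFactors.card

/-- `theta e = φ(e)/e`. -/
def theta (e : ℕ) : ℝ := (Nat.totient e : ℝ) / (e : ℝ)

/-- Membership in the class ℛ of rational functions over `F` (relative to `n = q^m - 1`):
`f` is not of the form `c · x^j · h(x)^d` for any integer `j`, divisor `d > 1` of `n`,
`c ∈ F*` and rational function `h`. -/
def InCalR (F : Type*) [Field F] (n : ℕ) (f : RatFunc F) : Prop :=
  ¬ ∃ (c : F) (j : ℤ) (d : ℕ) (h : RatFunc F),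
      c ≠ 0 ∧ 1 < d ∧ d ∣ n ∧ f = RatFunc.C c * RatFunc.X ^ j * h ^ d

/-- The degree sum of a rational function: the sum of the degrees of its numerator
and denominator (in lowest terms). -/
def degSum {F : Type*} [Field F] (f : RatFunc F) : ℕ :=
  f.num.natDegree + f.denom.natDegree

/-- `x` is a zero or a pole of the rational function `f`. -/
def IsZeroOrPole {F : Type*} [Field F] (f : RatFunc F) (x : F) : Prop :=
  Polynomial.eval x f.num = 0 ∨ Polynomial.eval x f.denom = 0

/-- `x` is a primitive element of the finite field `F`, i.e. a generator of `F*`. -/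
def IsPrimitiveElem {F : Type*} [Field F] [Fintype F] (x : F) : Prop :=
  orderOf x = Fintype.card F - 1

/-- For a divisor `e` of `|F| - 1`, a nonzero element `x` is `e`-free if the only
divisor `d` of `e` such that `x = β^d` for some `β` is `d = 1`. -/
def IsEFree {F : Type*} [Field F] (e : ℕ) (x : F) : Prop :=
  x ≠ 0 ∧ ∀ d : ℕ, d ∣ e → (∃ β : F, β ^ d = x) → d = 1

/-- `NCount Fq f g a b e₁ e₂` is the number of `ε ∈ F ∖ S` (where `S` consists of `0`
together with the zeros and poles of `f` and `g`) such that `f(ε)` is `e₁`-free,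
`g(ε)` is `e₂`-free, `Tr_{F/Fq}(ε) = a` and `Tr_{F/Fq}(ε⁻¹) = b`. -/
def NCount (Fq : Type*) {F : Type*} [Field Fq] [Field F] [Algebra Fq F]
    (f g : RatFunc F) (a b : Fq) (e₁ e₂ : ℕ) : ℕ :=
  Set.ncard {ε : F | ¬ (ε = 0 ∨ IsZeroOrPole f ε ∨ IsZeroOrPole g ε) ∧
    IsEFree e₁ (f.eval (RingHom.id F) ε) ∧ IsEFree e₂ (g.eval (RingHom.id F) ε) ∧
    Algebra.trace Fq F ε = a ∧ Algebra.trace Fq F ε⁻¹ = b}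

/-!
Write `S(e₁, e₂)` for the set counted by `N(e₁, e₂)`; it shrinks as `e₁, e₂` grow in
divisibility. If `ε ∈ S(d, d)` lies outside `S(q^m-1, q^m-1)`, then `f(ε)` or `g(ε)` is an
`ℓ`-th power for some prime `ℓ ∣ q^m-1`, with `ℓ ∤ d` because `ε ∈ S(d, d)`; so `ε` misses
`S(pᵢd, d)` or `S(d, pᵢd)` for some `i`. Bounding `S(d, d) ∖ S(q^m-1, q^m-1)` by the union of
these `2r` complements gives the inequality.
-/

namespace Set

variable {α ι : Type*}

lemma ncard_add_ncard_sub_le_ncard_inter [Finite α] {s B C : Set α} (hB : B ⊆ s) (hC : C ⊆ s) :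
    (B.ncard : ℝ) + C.ncard - s.ncard ≤ (B ∩ C).ncard := by
  have hunion := ncard_union_add_ncard_inter B C
  have hle : (B ∪ C).ncard ≤ s.ncard := ncard_le_ncard (union_subset hB hC)
  have : ((B ∪ C).ncard : ℝ) + (B ∩ C).ncard = B.ncard + C.ncard := by exact_mod_cast hunion
  have : ((B ∪ C).ncard : ℝ) ≤ s.ncard := by exact_mod_cast hle
  linarith

theorem sum_ncard_sub_le_ncard [Finite α] {s A : Set α} {B : ι → Set α} {P : Finset ι}
    (hB : ∀ i ∈ P, B i ⊆ s) (hA : s ∩ ⋂ i ∈ P, B i ⊆ A) :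
    ∑ i ∈ P, ((B i).ncard : ℝ) - (P.card - 1) * s.ncard ≤ A.ncard := by
  have hcover : s \ A ⊆ ⋃ i ∈ P, s \ B i := by
    rintro x ⟨hxs, hxA⟩
    by_contra hx
    simp only [mem_iUnion, mem_sdiff, not_exists, not_and, not_not] at hx
    exact hxA (hA ⟨hxs, mem_iInter₂.mpr fun i hi => hx i hi hxs⟩)
  have hsdiff : ∀ i ∈ P, ((s \ B i).ncard : ℝ) = s.ncard - (B i).ncard := fun i hi => by
    rw [eq_sub_iff_add_eq]; exact_mod_cast ncard_sdiff_add_ncard_of_subset (hB i hi)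
  have hunion : ((s \ A).ncard : ℝ) ≤ ∑ i ∈ P, ((s \ B i).ncard : ℝ) := by
    exact_mod_cast (ncard_le_ncard hcover).trans (P.set_ncard_biUnion_le _)
  have hsA : (s.ncard : ℝ) ≤ (s \ A).ncard + A.ncard := by
    exact_mod_cast ncard_le_ncard_sdiff_add_ncard s A
  rw [Finset.sum_congr rfl hsdiff, Finset.sum_sub_distrib, Finset.sum_const, nsmul_eq_mul]
    at hunion
  linarith

theorem sum_ncard_add_sum_ncard_sub_le_ncard [Finite α] {s A : Set α} {B C : ι → Set α}
    {P : Finset ι} (hB : ∀ i ∈ P, B i ⊆ s) (hC : ∀ i ∈ P, C i ⊆ s)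
    (hA : s ∩ ⋂ i ∈ P, (B i ∩ C i) ⊆ A) :
    ∑ i ∈ P, ((B i).ncard : ℝ) + ∑ i ∈ P, ((C i).ncard : ℝ) - (2 * P.card - 1) * s.ncard
      ≤ A.ncard := by
  have hsieve := sum_ncard_sub_le_ncard
    (fun i hi => inter_subset_left.trans (hB i hi)) hA
  have hpair : ∑ i ∈ P, ((B i).ncard + (C i).ncard - s.ncard : ℝ)
      ≤ ∑ i ∈ P, ((B i ∩ C i).ncard : ℝ) :=
    Finset.sum_le_sum fun i hi => ncard_add_ncard_sub_le_ncard_inter (hB i hi) (hC i hi)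
  rw [Finset.sum_sub_distrib, Finset.sum_add_distrib, Finset.sum_const, nsmul_eq_mul] at hpair
  linarith

end Set

namespace IsEFree

variable {F : Type*} [Field F] {e d : ℕ} {x : F}

lemma mono {e' : ℕ} (h : e' ∣ e) (hx : IsEFree e x) : IsEFree e' x :=
  ⟨hx.1, fun c hc hroot => hx.2 c (hc.trans h) hroot⟩

/-- A `c`-th root of `x` with `c ≠ 1` yields a `c.minFac`-th root, so it suffices to test primes. -/
lemma of_forall_prime (hx : x ≠ 0) (h : ∀ ℓ, ℓ.Prime → ℓ ∣ e → ∀ β : F, β ^ ℓ ≠ x) :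
    IsEFree e x := by
  refine ⟨hx, fun c hc ⟨β, hβ⟩ => by_contra fun hc1 => ?_⟩
  have hℓc : c.minFac ∣ c := Nat.minFac_dvd c
  refine h c.minFac (Nat.minFac_prime hc1) (hℓc.trans hc) (β ^ (c / c.minFac)) ?_
  rw [← pow_mul, Nat.div_mul_cancel hℓc, hβ]

lemma of_forall_prime_not_dvd (hd : IsEFree d x)
    (h : ∀ ℓ, ℓ.Prime → ℓ ∣ e → ¬ ℓ ∣ d → IsEFree (ℓ * d) x) : IsEFree e x := by
  refine of_forall_prime hd.1 fun ℓ hℓ hℓe β hβ => hℓ.one_lt.ne' ?_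
  by_cases hℓd : ℓ ∣ d
  · exact hd.2 ℓ hℓd ⟨β, hβ⟩
  · exact (h ℓ hℓ hℓe hℓd).2 ℓ (dvd_mul_right ℓ d) ⟨β, hβ⟩

end IsEFree

section Sieve

variable (Fq : Type*) {F : Type*} [Field Fq] [Field F] [Algebra Fq F]
  (f g : RatFunc F) (a b : Fq)

def sieveSet (e₁ e₂ : ℕ) : Set F :=
  {ε : F | ¬ (ε = 0 ∨ IsZeroOrPole f ε ∨ IsZeroOrPole g ε) ∧
    IsEFree e₁ (f.eval (RingHom.id F) ε) ∧ IsEFree e₂ (g.eval (RingHom.id F) ε) ∧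
    Algebra.trace Fq F ε = a ∧ Algebra.trace Fq F ε⁻¹ = b}

lemma nCount_eq_ncard_sieveSet (e₁ e₂ : ℕ) :
    NCount Fq f g a b e₁ e₂ = (sieveSet Fq f g a b e₁ e₂).ncard :=
  rfl

variable {Fq f g a b}

lemma sieveSet_mono {e₁ e₂ e₁' e₂' : ℕ} (h₁ : e₁' ∣ e₁) (h₂ : e₂' ∣ e₂) :
    sieveSet Fq f g a b e₁ e₂ ⊆ sieveSet Fq f g a b e₁' e₂' :=
  fun _ ⟨hS, hf, hg, htr⟩ => ⟨hS, hf.mono h₁, hg.mono h₂, htr⟩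

lemma sieveSet_inter_iInter_subset {e d : ℕ} {P : Finset ℕ}
    (hP : ∀ ℓ, ℓ.Prime → ℓ ∣ e → ¬ ℓ ∣ d → ℓ ∈ P) :
    sieveSet Fq f g a b d d ∩
        ⋂ ℓ ∈ P, (sieveSet Fq f g a b d (ℓ * d) ∩ sieveSet Fq f g a b (ℓ * d) d)
      ⊆ sieveSet Fq f g a b e e := by
  rintro x ⟨⟨hS, hf, hg, htr⟩, hx⟩
  have hx : ∀ ℓ ∈ P, x ∈ sieveSet Fq f g a b d (ℓ * d) ∧ x ∈ sieveSet Fq f g a b (ℓ * d) d :=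
    fun ℓ hℓ => Set.mem_iInter₂.mp hx ℓ hℓ
  refine ⟨hS, hf.of_forall_prime_not_dvd fun ℓ hℓ hℓe hℓd => ?_,
    hg.of_forall_prime_not_dvd fun ℓ hℓ hℓe hℓd => ?_, htr⟩
  · exact (hx ℓ (hP ℓ hℓ hℓe hℓd)).2.2.1
  · exact (hx ℓ (hP ℓ hℓ hℓe hℓd)).1.2.2.1

end Sieve

theorem stmt_4_general (q m : ℕ)
    (Fq F : Type*) [Field Fq] [Field F] [Algebra Fq F] [Fintype F]
    (f g : RatFunc F)
    (a b : Fq) (d : ℕ)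
    (P : Finset ℕ) (hP : ∀ r : ℕ, r ∈ P ↔ r.Prime ∧ r ∣ q ^ m - 1 ∧ ¬ r ∣ d) :
    (NCount Fq f g a b (q ^ m - 1) (q ^ m - 1) : ℝ) ≥
      (∑ pi ∈ P, (NCount Fq f g a b d (pi * d) : ℝ)) +
        (∑ pi ∈ P, (NCount Fq f g a b (pi * d) d : ℝ)) -
        (2 * (P.card : ℝ) - 1) * (NCount Fq f g a b d d : ℝ) := by
  simp only [nCount_eq_ncard_sieveSet]
  exact Set.sum_ncard_add_sum_ncard_sub_le_ncard
    (fun ℓ _ => sieveSet_mono dvd_rfl (dvd_mul_left d ℓ))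
    (fun ℓ _ => sieveSet_mono (dvd_mul_left d ℓ) dvd_rfl)
    (sieveSet_inter_iInter_subset fun ℓ hℓ hℓe hℓd => (hP ℓ).mpr ⟨hℓ, hℓe, hℓd⟩)

/-- **Sieving inequality (Lemma 3.5).** If `d ∣ q^m − 1` and `P = {p₁, …, p_r}` is the
set of all primes dividing `q^m − 1` but not `d`, then
`N(q^m−1, q^m−1) ≥ Σᵢ N(d, pᵢd) + Σᵢ N(pᵢd, d) − (2r−1)·N(d, d)`. -/
theorem stmt_4 (p k q m : ℕ) (hp : p.Prime) (hk : 0 < k) (hqpk : q = p ^ k) (hm : 0 < m)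
    (Fq F : Type*) [Field Fq] [Field F] [Algebra Fq F] [Fintype Fq] [Fintype F]
    (hcard_q : Fintype.card Fq = q) (hcard_F : Fintype.card F = q ^ m)
    (f g : RatFunc F)
    (hf : InCalR F (q ^ m - 1) f) (hg : InCalR F (q ^ m - 1) g)
    (a b : Fq) (d : ℕ) (hd : d ∣ q ^ m - 1)
    (P : Finset ℕ) (hP : ∀ r : ℕ, r ∈ P ↔ r.Prime ∧ r ∣ q ^ m - 1 ∧ ¬ r ∣ d) :
    (NCount Fq f g a b (q ^ m - 1) (q ^ m - 1) : ℝ) ≥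
      (∑ pi ∈ P, (NCount Fq f g a b d (pi * d) : ℝ)) +
        (∑ pi ∈ P, (NCount Fq f g a b (pi * d) d : ℝ)) -
        (2 * (P.card : ℝ) - 1) * (NCount Fq f g a b d d : ℝ) :=
  stmt_4_general q m Fq F f g a b d P hP
end
end

section
/- For every integer n ≥ 3, the number of distinct prime divisors of n satisfies w(n) ≤ 1.385·(log n)/(log log n). -/
/-!
If `n` has `k` distinct prime factors, then `n` is at least the product `P` of the first `k`
primes. Since `L ↦ L / log L` increases on `[e, ∞)`, it suffices to show
`k · log log P ≤ 1.385 · log P` once `log P ≥ e`. For `4 ≤ k ≤ 82` this is checked numerically,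
with the exact first ten primes (the constant is tight at `k = 9`, `P = 223092870`) and
`p_j ≥ 3j - 2` beyond. For larger `k`, `P ≥ 3^s s! ≥ s^s` with `s = k - 2`, and
`log log (s^s) = log s + log log s` is small enough. For `k ≤ 3`, `log L ≤ L / e` suffices.
-/

open Real Finset

lemma prod_range_card_nth_le_prod {p : ℕ → Prop} [DecidablePred p] (S : Finset ℕ)
    (hS : ∀ x ∈ S, p x) : ∏ i ∈ range #S, Nat.nth p i ≤ ∏ x ∈ S, x := by
  induction S using Finset.induction_on_max with
  | empty => simp
  | insert a s ha ih =>
    have has : a ∉ s := fun h => lt_irrefl a (ha a h)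
    have hcount : #s < Nat.count p (a + 1) := by
      rw [Nat.count_eq_card_filter_range]
      calc #s < #(insert a s) := by rw [card_insert_of_notMem has]; omega
        _ ≤ #((range (a + 1)).filter p) := card_le_card fun x hx => by
          have hxa : x ≤ a := by
            rcases mem_insert.1 hx with rfl | hx
            · rfl
            · exact (ha x hx).le
          simpa [Nat.lt_succ_iff, hxa] using hS x hx
    rw [card_insert_of_notMem has, prod_range_succ, prod_insert has, mul_comm a]
    gcongr
    · exact ih fun x hx => hS x (mem_insert_of_mem hx)
    · exact Nat.lt_succ_iff.1 (Nat.nth_lt_of_lt_count hcount)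

lemma prod_nth_prime_card_primeFactors_le {n : ℕ} (hn : n ≠ 0) :
    ∏ i ∈ range #n.primeFactors, Nat.nth Nat.Prime i ≤ n :=
  (prod_range_card_nth_le_prod _ fun _ hp => Nat.prime_of_mem_primeFactors hp).trans
    (Nat.le_of_dvd (Nat.pos_of_ne_zero hn) (Nat.prod_primeFactors_dvd n))

lemma Nat.Prime.mod_six_eq_one_or_five {p : ℕ} (hp : p.Prime) (h5 : 5 ≤ p) :
    p % 6 = 1 ∨ p % 6 = 5 := by
  have h2 : ¬ 2 ∣ p := fun h => by have := hp.eq_one_or_self_of_dvd 2 h; omega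
  have h3 : ¬ 3 ∣ p := fun h => by have := hp.eq_one_or_self_of_dvd 3 h; omega
  omega

lemma count_prime_add_six_le {y : ℕ} (hy : 5 ≤ y) :
    Nat.count Nat.Prime (y + 6) ≤ Nat.count Nat.Prime y + 2 := by
  have hwheel : ∀ r < 6, Nat.count (fun i => (r + i) % 6 = 1 ∨ (r + i) % 6 = 5) 6 = 2 := by
    decide
  have hle : Nat.count (fun i => Nat.Prime (y + i)) 6
      ≤ Nat.count (fun i => (y % 6 + i) % 6 = 1 ∨ (y % 6 + i) % 6 = 5) 6 :=
    Nat.count_mono_left fun i _ hi => by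
      have := hi.mod_six_eq_one_or_five (by omega)
      omega
  rw [Nat.count_add]
  have := hwheel (y % 6) (Nat.mod_lt _ (by norm_num))
  omega

lemma count_prime_three_mul_sub_two_le (j : ℕ) : Nat.count Nat.Prime (3 * j - 2) ≤ j := by
  induction j using Nat.strong_induction_on with
  | _ j ih =>
    rcases lt_or_ge j 5 with hj | hj
    · interval_cases j <;> decide
    · have h := count_prime_add_six_le (y := 3 * (j - 2) - 2) (by omega)
      rw [show 3 * (j - 2) - 2 + 6 = 3 * j - 2 by omega] at h
      have := ih (j - 2) (by omega)
      omega

lemma three_mul_sub_two_le_nth_prime (j : ℕ) : 3 * j - 2 ≤ Nat.nth Nat.Prime j :=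
  (Nat.count_le_iff_le_nth Nat.infinite_setOfPred_prime).1 (count_prime_three_mul_sub_two_le j)

def firstPrimes : List ℕ := [2, 3, 5, 7, 11, 13, 17, 19, 23, 29]

lemma firstPrimes_getD_le_nth_prime (j : ℕ) : firstPrimes.getD j 0 ≤ Nat.nth Nat.Prime j := by
  refine (Nat.count_le_iff_le_nth Nat.infinite_setOfPred_prime).1 ?_
  rcases lt_or_ge j 10 with hj | hj
  · interval_cases j <;> decide
  · rw [List.getD_eq_default _ _ hj]
    simp

def nthPrimeLowerBound (j : ℕ) : ℕ := max (firstPrimes.getD j 0) (3 * j - 2)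

lemma nthPrimeLowerBound_le_nth_prime (j : ℕ) : nthPrimeLowerBound j ≤ Nat.nth Nat.Prime j :=
  max_le (firstPrimes_getD_le_nth_prime j) (three_mul_sub_two_le_nth_prime j)

lemma three_pow_mul_factorial_le_prod_nth_prime (s : ℕ) :
    3 ^ s * s.factorial ≤ ∏ j ∈ range (2 + s), Nat.nth Nat.Prime j := by
  rw [prod_range_add]
  calc 3 ^ s * s.factorial = ∏ j ∈ range s, 3 * (j + 1) := by
        rw [prod_mul_distrib, prod_const, card_range, prod_range_add_one_eq_factorial]
    _ ≤ ∏ j ∈ range s, Nat.nth Nat.Prime (2 + j) :=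
        prod_le_prod' fun j _ => by have := three_mul_sub_two_le_nth_prime (2 + j); omega
    _ ≤ _ := Nat.le_mul_of_pos_left _ (prod_pos fun j _ => (Nat.prime_nth_prime j).pos)

lemma le_div_log_log_of_mul_log_le {k c ℓ x : ℝ} (hk : 0 ≤ k) (hℓ : exp 1 ≤ ℓ)
    (hℓx : ℓ ≤ log x) (h : k * log ℓ ≤ c * ℓ) : k ≤ c * log x / log (log x) := by
  set L := log x
  have hℓ0 : 0 < ℓ := (exp_pos 1).trans_le hℓ
  have hL0 : 0 < L := hℓ0.trans_le hℓx
  have hlogL : 0 < log L := log_pos ((one_lt_exp_iff.2 one_pos).trans_le (hℓ.trans hℓx))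
  have hanti : log L / L ≤ log ℓ / ℓ := log_div_self_antitoneOn hℓ (hℓ.trans hℓx) hℓx
  rw [le_div_iff₀ hlogL]
  calc k * log L = k * L * (log L / L) := by field_simp
    _ ≤ k * L * (log ℓ / ℓ) := by gcongr
    _ = L / ℓ * (k * log ℓ) := by ring
    _ ≤ L / ℓ * (c * ℓ) := by gcongr
    _ = c * L := by field_simp

lemma le_div_log_log_of_le_three {k x : ℝ} (hk : k ≤ 3) (hx : exp 1 < x) :
    k ≤ 1.385 * log x / log (log x) := by
  set L := log x
  have hL : 1 < L := by simpa using log_lt_log (exp_pos 1) hx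
  have hlogL : 0 < log L := log_pos hL
  have hlog_le : log L ≤ L / exp 1 := by
    have := log_le_sub_one_of_pos (div_pos (zero_lt_one.trans hL) (exp_pos 1))
    rw [log_div (by positivity) (exp_pos 1).ne', log_exp] at this
    linarith
  have he : (2.7 : ℝ) < exp 1 := lt_trans (by norm_num) exp_one_gt_d9
  rw [le_div_iff₀ hlogL]
  calc k * log L ≤ 3 * (L / exp 1) := mul_le_mul hk hlog_le hlogL.le (by norm_num)
    _ ≤ 1.385 * L := by
        rw [mul_div_assoc', div_le_iff₀ (exp_pos 1)]
        nlinarith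

lemma pow_self_le_three_pow_mul_factorial (s : ℕ) : (s : ℝ) ^ s ≤ 3 ^ s * s.factorial := by
  have h := pow_div_factorial_le_exp (s : ℝ) (Nat.cast_nonneg s) s
  rw [div_le_iff₀ (by positivity)] at h
  calc (s : ℝ) ^ s ≤ exp s * s.factorial := h
    _ = exp 1 ^ s * s.factorial := by rw [← exp_nat_mul, mul_one]
    _ ≤ 3 ^ s * s.factorial := by gcongr; exact exp_one_lt_three.le

lemma le_div_log_log_of_pow_self_le {s : ℕ} {x : ℝ} (hs : 81 ≤ s) (hx : (s : ℝ) ^ s ≤ x) :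
    (s : ℝ) + 2 ≤ 1.385 * log x / log (log x) := by
  have hs' : (81 : ℝ) ≤ s := by exact_mod_cast hs
  set t := log s
  have ht : 4 ≤ t := by
    calc (4 : ℝ) ≤ 4 * log 3 := by
          have := (lt_log_iff_exp_lt (by norm_num)).2 exp_one_lt_three
          linarith
      _ = log 81 := by rw [show (81 : ℝ) = 3 ^ 4 by norm_num, log_pow]; norm_num
      _ ≤ t := log_le_log (by norm_num) hs'
  have hlog_t : log t ≤ t / 4 + 0.3863 := by
    have := log_le_sub_one_of_pos (show 0 < t / 4 by linarith)
    rw [log_div (by linarith) (by norm_num), show (4 : ℝ) = 2 ^ 2 by norm_num, log_pow] at this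
    linarith [log_two_lt_d9]
  refine le_div_log_log_of_mul_log_le (by positivity) (ℓ := s * t) ?_ ?_ ?_
  · nlinarith [exp_one_lt_d9]
  · calc (s : ℝ) * t = log ((s : ℝ) ^ s) := by rw [log_pow]
      _ ≤ log x := log_le_log (by positivity) hx
  · rw [log_mul (by positivity) (by positivity)]
    nlinarith

/-- `(log P)^k ≤ P^1.385`, with `log P` bounded above by `(⌊log₂ P^8⌋ + 1) · 0.6931471808 / 8`. -/
def LogLogCertificate (k P : ℕ) : Prop :=
  16 ≤ P ∧
    ((Nat.log2 (P ^ 8) + 1) * 6931471808) ^ (200 * k) ≤ P ^ 277 * (8 * 10 ^ 10) ^ (200 * k)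

instance (k P : ℕ) : Decidable (LogLogCertificate k P) :=
  inferInstanceAs (Decidable (_ ∧ _))

theorem logLogCertificate_prod_nthPrimeLowerBound :
    ∀ k < 83, 4 ≤ k → LogLogCertificate k (∏ j ∈ range k, nthPrimeLowerBound j) := by
  decide +kernel

namespace LogLogCertificate

lemma exp_one_le_log {k P : ℕ} (h : LogLogCertificate k P) : exp 1 ≤ log P := by
  have h16 : (16 : ℝ) ≤ P := by exact_mod_cast h.1
  calc exp 1 ≤ 4 * 0.6931471803 := by linarith [exp_one_lt_d9]
    _ ≤ 4 * log 2 := by linarith [log_two_gt_d9]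
    _ = log 16 := by rw [show (16 : ℝ) = 2 ^ 4 by norm_num, log_pow]; norm_num
    _ ≤ log P := log_le_log (by norm_num) h16

lemma mul_log_log_le {k P : ℕ} (h : LogLogCertificate k P) :
    (k : ℝ) * log (log P) ≤ 1.385 * log P := by
  set N := Nat.log2 (P ^ 8)
  set u : ℝ := (N + 1) * 6931471808 / (8 * 10 ^ 10)
  have hP : (16 : ℝ) ≤ P := by exact_mod_cast h.1
  have hlogP : 0 < log P := (exp_pos 1).trans_le h.exp_one_le_log
  have hlog_le : log P ≤ u := by
    have hpow : ((P : ℝ) ^ 8) < 2 ^ (N + 1) := by exact_mod_cast Nat.lt_log2_self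
    have hlt := log_lt_log (by positivity) hpow
    rw [log_pow, log_pow] at hlt
    have hlog2 := mul_lt_mul_of_pos_left log_two_lt_d9 (show (0 : ℝ) < N + 1 by positivity)
    push_cast at hlt
    simp only [u]
    linarith
  have hu : u ^ (200 * k) ≤ (P : ℝ) ^ 277 := by
    rw [div_pow, div_le_iff₀ (by positivity)]
    exact_mod_cast h.2
  have hlog_u := log_le_log (by positivity) hu
  rw [log_pow, log_pow] at hlog_u
  have hloglog : log (log P) ≤ log u := log_le_log hlogP hlog_le
  push_cast at hlog_u
  nlinarith [Nat.cast_nonneg (α := ℝ) k]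

lemma le_div_log_log {k P n : ℕ} (h : LogLogCertificate k P) (hn : P ≤ n) :
    (k : ℝ) ≤ 1.385 * log n / log (log n) := by
  have hP : (16 : ℝ) ≤ P := by exact_mod_cast h.1
  exact le_div_log_log_of_mul_log_le (Nat.cast_nonneg k) h.exp_one_le_log
    (log_le_log (by positivity) (by exact_mod_cast hn)) h.mul_log_log_le

end LogLogCertificate

/-- **Lemma 4.3 (Robin's bound).** For `n ≥ 3`, the number `w(n)` of distinct prime
divisors of `n` satisfies `w(n) ≤ 1.385·log n / log log n`. -/
theorem stmt_12 (n : ℕ) (hn : 3 ≤ n) :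
    (n.primeFactors.card : ℝ) ≤ 1.385 * Real.log n / Real.log (Real.log n) := by
  have hprod := prod_nth_prime_card_primeFactors_le (n := n) (by omega)
  rcases le_or_gt #n.primeFactors 3 with hk | hk
  · exact le_div_log_log_of_le_three (by exact_mod_cast hk)
      (exp_one_lt_three.trans_le (by exact_mod_cast hn))
  rcases lt_or_ge #n.primeFactors 83 with hk' | hk'
  · refine (logLogCertificate_prod_nthPrimeLowerBound _ hk' hk).le_div_log_log ?_
    exact (prod_le_prod' fun j _ => nthPrimeLowerBound_le_nth_prime j).trans hprod
  · obtain ⟨s, hs⟩ : ∃ s, #n.primeFactors = 2 + s := ⟨_, (Nat.add_sub_of_le (by omega)).symm⟩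
    rw [hs] at hprod ⊢
    push_cast
    rw [add_comm]
    refine le_div_log_log_of_pow_self_le (by omega) ?_
    calc (s : ℝ) ^ s ≤ 3 ^ s * s.factorial := pow_self_le_three_pow_mul_factorial s
      _ ≤ n := by exact_mod_cast (three_pow_mul_factorial_le_prod_nth_prime s).trans hprod
end
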